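/- arXiv:1101.5767 — 2 statements merged into one kernel-verified Lean document; each statement's English description precedes it below -/
import Mathlib

section
/- Let g ≥ 2. Consider the graph whose vertices are the primitive vectors of H = ℤ^{2g}, with an edge between distinct vertices v and w whenever ω(v,w) = 0 and gcd(v,w) = 1 (i.e. v and w span a rank-2 isotropic direct summand of H). Then this graph is connected: any two primitive vectors are joined by a finite path of such edges. (This is the 0-connectivity part of the proposition that the complex Λ(g) of ordered bases of isotropic direct summands of H is (g−2)-connected.) -/
namespace Paper

/-- The standard symplectic form on `R^{2g}` with respect to the basis
`a_1, b_1, …, a_g, b_g` (coordinates `2i, 2i+1` for `a_{i+1}, b_{i+1}`). -/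
def symp {R : Type*} [CommRing R] {g : ℕ} (x y : Fin (2 * g) → R) : R :=
  ∑ i : Fin g,
    (x ⟨2 * i.1, by omega⟩ * y ⟨2 * i.1 + 1, by omega⟩ -
      x ⟨2 * i.1 + 1, by omega⟩ * y ⟨2 * i.1, by omega⟩)

theorem symp_add_left {R : Type*} [CommRing R] {g : ℕ} (x y a : Fin (2 * g) → R) :
    symp (x + y) a = symp x a + symp y a := by
  unfold symp
  rw [← Finset.sum_add_distrib]
  exact Finset.sum_congr rfl fun i _ => by simp only [Pi.add_apply]; ring

theorem symp_smul_left {R : Type*} [CommRing R] {g : ℕ} (c : R) (x a : Fin (2 * g) → R) :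
    symp (c • x) a = c * symp x a := by
  unfold symp
  rw [Finset.mul_sum]
  exact Finset.sum_congr rfl fun i _ => by simp only [Pi.smul_apply, smul_eq_mul]; ring

theorem symp_zero_left {R : Type*} [CommRing R] {g : ℕ} (a : Fin (2 * g) → R) :
    symp (0 : Fin (2 * g) → R) a = 0 := by
  unfold symp; simp

/-- The orthogonal complement `A^⊥ = {x | ω(x,a) = 0 for all a ∈ A}`. -/
def perp {R : Type*} [CommRing R] {g : ℕ} (A : Set (Fin (2 * g) → R)) :
    Submodule R (Fin (2 * g) → R) where
  carrier := {x | ∀ a ∈ A, symp x a = 0}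
  add_mem' := by
    intro x y hx hy a ha
    rw [symp_add_left, hx a ha, hy a ha, add_zero]
  zero_mem' := by
    intro a ha
    exact symp_zero_left a
  smul_mem' := by
    intro c x hx a ha
    rw [symp_smul_left, hx a ha, mul_zero]

/-- The submodule of vectors whose first `m` coordinates vanish.
`H_k = coordZero R (2*g) (2*(k-1))`, and `H₂ = coordZero R (2*(g+1)) 2`. -/
def coordZero (R : Type*) [CommRing R] (n m : ℕ) : Submodule R (Fin n → R) where
  carrier := {v | ∀ j : Fin n, (j : ℕ) < m → v j = 0}
  add_mem' := by
    intro x y hx hy j hj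
    have h1 := hx j hj
    have h2 := hy j hj
    simp [Pi.add_apply, h1, h2]
  zero_mem' := by intro j hj; rfl
  smul_mem' := by
    intro c x hx j hj
    have h1 := hx j hj
    simp [Pi.smul_apply, h1]

/-- The standard basis vector `a_{i+1}` (`i` is 0-indexed). -/
def stdA (R : Type*) [CommRing R] (g i : ℕ) : Fin (2 * g) → R :=
  fun j => if (j : ℕ) = 2 * i then 1 else 0

/-- The standard basis vector `b_{i+1}` (`i` is 0-indexed). -/
def stdB (R : Type*) [CommRing R] (g i : ℕ) : Fin (2 * g) → R :=
  fun j => if (j : ℕ) = 2 * i + 1 then 1 else 0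

/-- Regard an integer vector as a rational vector. -/
def qcast {n : ℕ} (v : Fin n → ℤ) : Fin n → ℚ := fun j => (v j : ℚ)

/-- The projection `pr₂` deleting the `a_1`- and `b_1`-coordinates. -/
def pr2 {R : Type*} [CommRing R] {n : ℕ} (v : Fin n → R) : Fin n → R :=
  fun j => if (j : ℕ) < 2 then 0 else v j

/-- `gcd(v_1, …, v_m) = 1`: the vectors are linearly independent and their
ℤ-span is a direct summand. -/
def IsUnimodular {n m : ℕ} (v : Fin m → Fin n → ℤ) : Prop :=
  LinearIndependent ℤ v ∧
    ∃ C : Submodule ℤ (Fin n → ℤ), IsCompl (Submodule.span ℤ (Set.range v)) C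

/-- A primitive vector. -/
def Primitive {n : ℕ} (v : Fin n → ℤ) : Prop := IsUnimodular ![v]

/-- The entries of `w` are pairwise `ω`-orthogonal. -/
def PairwiseOrth {g m : ℕ} (w : Fin m → Fin (2 * g) → ℤ) : Prop :=
  ∀ i j, i ≠ j → symp (w i) (w j) = 0

/-- `Λ³ W`: the span of all wedges of three vectors from `W` inside the
exterior algebra. -/
def wedge3 {g : ℕ} (W : Submodule ℚ (Fin (2 * g) → ℚ)) :
    Submodule ℚ (ExteriorAlgebra ℚ (Fin (2 * g) → ℚ)) :=
  Submodule.span ℚ {x | ∃ z₁ ∈ W, ∃ z₂ ∈ W, ∃ z₃ ∈ W,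
    x = ExteriorAlgebra.ι ℚ z₁ * ExteriorAlgebra.ι ℚ z₂ * ExteriorAlgebra.ι ℚ z₃}

/-- `u ∧ Λ² W`. -/
def uWedge2 {g : ℕ} (u : Fin (2 * g) → ℚ) (W : Submodule ℚ (Fin (2 * g) → ℚ)) :
    Submodule ℚ (ExteriorAlgebra ℚ (Fin (2 * g) → ℚ)) :=
  Submodule.span ℚ {x | ∃ z₁ ∈ W, ∃ z₂ ∈ W,
    x = ExteriorAlgebra.ι ℚ u * ExteriorAlgebra.ι ℚ z₁ * ExteriorAlgebra.ι ℚ z₂}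

/-- `u ∧ u' ∧ W`. -/
def uuWedge1 {g : ℕ} (u u' : Fin (2 * g) → ℚ) (W : Submodule ℚ (Fin (2 * g) → ℚ)) :
    Submodule ℚ (ExteriorAlgebra ℚ (Fin (2 * g) → ℚ)) :=
  Submodule.span ℚ {x | ∃ z ∈ W,
    x = ExteriorAlgebra.ι ℚ u * ExteriorAlgebra.ι ℚ u' * ExteriorAlgebra.ι ℚ z}

/-- The simplicial differential: on the summand indexed by `w` it sends `z` to
`Σ_j (-1)^j · z` placed in the summand indexed by `∂_j w`. -/
noncomputable def diff (g p : ℕ)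
    (ξ : (Fin (p + 1) → Fin (2 * g) → ℤ) →₀ ExteriorAlgebra ℚ (Fin (2 * g) → ℚ)) :
    (Fin p → Fin (2 * g) → ℤ) →₀ ExteriorAlgebra ℚ (Fin (2 * g) → ℚ) :=
  ξ.sum fun w z =>
    ∑ j : Fin (p + 1), ((-1 : ℚ) ^ (j : ℕ)) • Finsupp.single (fun i => w (j.succAbove i)) z

/-- The gcd of the determinants of all maximal square submatrices of the matrix
whose columns are the `v i`. -/
def vgcd {ι : Type*} [Fintype ι] {m : ℕ} (v : Fin m → ι → ℤ) : ℕ :=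
  Finset.univ.gcd fun r : Fin m → ι => (Matrix.det (Matrix.of fun i j => v j (r i))).natAbs

/-!
Every primitive vector `v` is joined to `a₁`. Split `v = d • r + m • s` with `r` primitive in
`⟨a₁, b₁⟩` and `s` primitive in its orthogonal complement; then `gcd(d, m) = 1` because `v` is
primitive. Whenever `x * y' - y * x' = ±1`, the vectors `x • r + y • s` and `x' • r + y' • s` are
adjacent, so the connectivity of the Farey graph (the Euclidean algorithm) joins `v` to `s`, and
`s` is adjacent to `a₁`.
-/

open Relation

section Symplectic

variable {R : Type*} [CommRing R] {g : ℕ}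

theorem symp_swap (x y : Fin (2 * g) → R) : symp y x = -symp x y := by
  unfold symp
  rw [← Finset.sum_neg_distrib]
  exact Finset.sum_congr rfl fun i _ => by ring

theorem symp_self (x : Fin (2 * g) → R) : symp x x = 0 := by
  unfold symp
  exact Finset.sum_eq_zero fun i _ => by ring

theorem symp_add_right (a x y : Fin (2 * g) → R) : symp a (x + y) = symp a x + symp a y := by
  rw [symp_swap, symp_add_left, symp_swap x, symp_swap y]
  ring

theorem symp_smul_right (c : R) (a x : Fin (2 * g) → R) : symp a (c • x) = c * symp a x := by
  rw [symp_swap, symp_smul_left, symp_swap x]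
  ring

theorem symp_smul_add_smul (r s : Fin (2 * g) → R) (x y x' y' : R) :
    symp (x • r + y • s) (x' • r + y' • s) = (x * y' - y * x') * symp r s := by
  simp only [symp_add_left, symp_add_right, symp_smul_left, symp_smul_right, symp_self,
    symp_swap s r]
  ring

theorem symp_eq_zero_of_support {x y : Fin (2 * g) → R}
    (hx : ∀ j : Fin (2 * g), ¬j.val < 2 → x j = 0) (hy : ∀ j : Fin (2 * g), j.val < 2 → y j = 0) :
    symp x y = 0 := by
  unfold symp
  refine Finset.sum_eq_zero fun ⟨i, hi⟩ _ => ?_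
  rcases Nat.eq_zero_or_pos i with rfl | hpos
  · simp [hy ⟨0, by omega⟩ (by simp), hy ⟨1, by omega⟩ (by simp)]
  · simp [hx ⟨2 * i, by omega⟩ (by simp; omega), hx ⟨2 * i + 1, by omega⟩ (by simp; omega)]

end Symplectic

section DualPair

variable (R : Type*) [CommRing R] {M : Type*} [AddCommGroup M] [Module R M]

def DualPair (v w : M) : Prop :=
  ∃ f g : Module.Dual R M, f v = 1 ∧ f w = 0 ∧ g v = 0 ∧ g w = 1

variable {R}

theorem DualPair.symm {v w : M} (h : DualPair R v w) : DualPair R w v := by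
  obtain ⟨f, g, h₁, h₂, h₃, h₄⟩ := h
  exact ⟨g, f, h₄, h₃, h₂, h₁⟩

theorem DualPair.ne [Nontrivial R] {v w : M} (h : DualPair R v w) : v ≠ w := by
  rintro rfl
  obtain ⟨f, -, h₁, h₂, -⟩ := h
  exact one_ne_zero (h₁.symm.trans h₂)

theorem DualPair.smul_add_smul {v w : M} (h : DualPair R v w) {x y x' y' : R}
    (hdet : IsUnit (x * y' - y * x')) : DualPair R (x • v + y • w) (x' • v + y' • w) := by
  obtain ⟨f, g, h₁, h₂, h₃, h₄⟩ := h
  obtain ⟨u, hu⟩ := hdet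
  have hu' : (↑u⁻¹ : R) * (x * y' - y * x') = 1 := by rw [← hu, Units.inv_mul]
  refine ⟨(↑u⁻¹ : R) • (y' • f - x' • g), (↑u⁻¹ : R) • (x • g - y • f), ?_, ?_, ?_, ?_⟩ <;>
    simp only [map_add, map_smul, LinearMap.smul_apply, LinearMap.sub_apply, smul_eq_mul,
      h₁, h₂, h₃, h₄]
  · linear_combination hu'
  · ring
  · ring
  · linear_combination hu'

end DualPair

section Unimodular

variable {n : ℕ}

theorem isUnimodular_of_dual {m : ℕ} {v : Fin m → Fin n → ℤ}
    (f : Fin m → Module.Dual ℤ (Fin n → ℤ)) (hf : ∀ i j, f i (v j) = if i = j then 1 else 0) :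
    IsUnimodular v := by
  set P := Submodule.span ℤ (Set.range v)
  let π : (Fin n → ℤ) →ₗ[ℤ] P := (∑ i, (f i).smulRight (v i)).codRestrict P fun x => by
    simpa using
      Submodule.sum_mem P fun i _ => Submodule.smul_mem P _ (Submodule.subset_span ⟨i, rfl⟩)
  have hπv : ∀ j, (π (v j) : Fin n → ℤ) = v j := fun j => by
    simp [π, hf]
  have hπ : ∀ x : P, π x = x := by
    rintro ⟨x, hx⟩
    obtain ⟨c, rfl⟩ := (Submodule.mem_span_range_iff_exists_fun ℤ).mp hx
    ext1
    simp only [map_sum, map_smul, Submodule.coe_sum, Submodule.coe_smul, hπv]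
  refine ⟨Fintype.linearIndependent_iff.mpr fun c hc i => ?_, LinearMap.ker π,
    LinearMap.isCompl_of_proj hπ⟩
  simpa only [map_sum, map_smul, map_zero, hf, smul_eq_mul, mul_ite, mul_one, mul_zero,
    Finset.sum_ite_eq, Finset.mem_univ, if_true] using congrArg (f i) hc

theorem primitive_of_dual {v : Fin n → ℤ} {f : Module.Dual ℤ (Fin n → ℤ)} (hf : f v = 1) :
    Primitive v :=
  isUnimodular_of_dual ![f] fun i j => by fin_cases i; fin_cases j; simpa using hf

theorem DualPair.isUnimodular {v w : Fin n → ℤ} (h : DualPair ℤ v w) : IsUnimodular ![v, w] := by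
  obtain ⟨f, g, h₁, h₂, h₃, h₄⟩ := h
  exact isUnimodular_of_dual ![f, g] fun i j => by fin_cases i <;> fin_cases j <;> simp [*]

theorem Primitive.exists_dual {v : Fin n → ℤ} (h : Primitive v) :
    ∃ f : Module.Dual ℤ (Fin n → ℤ), f v = 1 := by
  obtain ⟨hli, C, hC⟩ := h
  have hv : v ≠ 0 := by simpa using hli.ne_zero 0
  rw [Matrix.range_cons, Matrix.range_empty, Set.union_empty] at hC
  refine ⟨(LinearEquiv.coord ℤ _ v hv).toLinearMap ∘ₗ Submodule.projectionOnto _ C hC, ?_⟩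
  simp [LinearEquiv.coord_self, Submodule.projectionOnto_apply_left hC
    ⟨v, Submodule.mem_span_singleton_self v⟩]

end Unimodular

def FareyAdj (p q : ℤ × ℤ) : Prop := IsUnit (p.1 * q.2 - p.2 * q.1)

theorem reflTransGen_fareyAdj {d m : ℤ} (h : IsCoprime d m) :
    ReflTransGen FareyAdj (d, m) (0, 1) := by
  induction hn : m.natAbs using Nat.strong_induction_on generalizing d m with
  | _ n ih =>
  rcases eq_or_ne m 0 with rfl | hm
  · exact .single (by simpa [FareyAdj] using isCoprime_zero_right.mp h)
  obtain ⟨u, w, huw⟩ := h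
  -- Euclid's step: `(d, m)` is adjacent to `(a, u % m)`, where `u % m ≡ d⁻¹ (mod m)` is smaller
  -- than `|m|`.
  have hdet : d * (u % m) - m * -(w + d * (u / m)) = 1 := by
    rw [Int.emod_def]
    linear_combination huw
  have hb : (u % m).natAbs < n := by
    have := Int.emod_nonneg u hm
    have := Int.emod_lt u hm
    omega
  have hadj : FareyAdj (d, m) (-(w + d * (u / m)), u % m) := by
    simp only [FareyAdj]
    rw [hdet]
    exact isUnit_one
  exact .head hadj (ih _ hb ⟨-m, d, by linear_combination hdet⟩ rfl)

section Isotropic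

variable {g : ℕ}

/-- An edge of the graph; `DualPair ℤ v w` is a form of `gcd(v, w) = 1`. -/
def IsotropicPair (v w : Fin (2 * g) → ℤ) : Prop := symp v w = 0 ∧ DualPair ℤ v w

instance : Std.Symm (IsotropicPair (g := g)) where
  symm _ _ h := ⟨by rw [symp_swap, h.1, neg_zero], h.2.symm⟩

theorem IsotropicPair.primitive_right {v w : Fin (2 * g) → ℤ} (h : IsotropicPair v w) :
    Primitive w := by
  obtain ⟨-, -, g, -, -, -, hg⟩ := h
  exact primitive_of_dual hg

theorem IsotropicPair.smul_add_smul {r s : Fin (2 * g) → ℤ} (h : IsotropicPair r s)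
    {x y x' y' : ℤ} (hdet : IsUnit (x * y' - y * x')) :
    IsotropicPair (x • r + y • s) (x' • r + y' • s) :=
  ⟨by rw [symp_smul_add_smul, h.1, mul_zero], h.2.smul_add_smul hdet⟩

theorem IsotropicPair.reflTransGen_of_isCoprime {r s : Fin (2 * g) → ℤ} (h : IsotropicPair r s)
    {d m : ℤ} (hdm : IsCoprime d m) : ReflTransGen IsotropicPair (d • r + m • s) s := by
  simpa only [Function.onFun, zero_smul, one_smul, zero_add] using
    ReflTransGen.lift (fun p : ℤ × ℤ => p.1 • r + p.2 • s) (fun _ _ hpq => h.smul_add_smul hpq)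
      _ _ (reflTransGen_fareyAdj hdm)

end Isotropic

theorem exists_primitive_part_on {ι : Type*} (S : Finset ι) (hS : S.Nonempty) (z : ι → ℤ) :
    ∃ (d : ℤ) (z' : ι → ℤ) (f : Module.Dual ℤ (ι → ℤ)),
      (∀ j ∈ S, z j = d * z' j) ∧ (∀ j ∉ S, z' j = 0) ∧ f z' = 1 ∧
        ∀ x : ι → ℤ, (∀ j ∈ S, x j = 0) → f x = 0 := by
  classical
  obtain ⟨z₀, hz, hgcd⟩ := S.extract_gcd z hS
  set z' : ι → ℤ := fun j => if j ∈ S then z₀ j else 0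
  have hgcd' : S.gcd z' = 1 := by rwa [Finset.gcd_congr rfl fun j hj => if_pos hj]
  obtain ⟨c, hc⟩ := S.gcd_eq_sum_mul z'
  refine ⟨S.gcd z, z', ∑ j ∈ S, c j • LinearMap.proj j, fun j hj => by simp [z', hj, hz j hj],
    fun j hj => if_neg hj, ?_, fun x hx => ?_⟩
  · simp [← hgcd', hc, mul_comm]
  · simp only [LinearMap.sum_apply, LinearMap.smul_apply, LinearMap.proj_apply,
      smul_eq_mul]
    exact Finset.sum_eq_zero fun j hj => by rw [hx j hj, mul_zero]

theorem reflTransGen_stdA {g : ℕ} (hg : 2 ≤ g) {v : Fin (2 * g) → ℤ} (hv : Primitive v) :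
    ReflTransGen IsotropicPair v (stdA ℤ g 0) := by
  set S : Finset (Fin (2 * g)) := Finset.univ.filter fun j => j.val < 2
  obtain ⟨d, r, fr, hvr, hr, hfr, hfr0⟩ :=
    exists_primitive_part_on S ⟨⟨0, by omega⟩, by simp [S]⟩ v
  obtain ⟨m, s, fs, hvs, hs, hfs, hfs0⟩ :=
    exists_primitive_part_on Sᶜ ⟨⟨2, by omega⟩, by simp [S]⟩ v
  simp only [S, Finset.mem_compl, Finset.mem_filter, Finset.mem_univ, true_and, not_not]
    at hvr hr hfr0 hvs hs hfs0
  have hv_eq : v = d • r + m • s := by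
    funext j
    by_cases hj : j.val < 2
    · simp [hvr j hj, hs j hj]
    · simp [hvs j hj, hr j hj]
  have hdm : IsCoprime d m := by
    obtain ⟨f, hf⟩ := hv.exists_dual
    rw [hv_eq, map_add, map_smul, map_smul, smul_eq_mul, smul_eq_mul] at hf
    exact ⟨f r, f s, by linear_combination hf⟩
  have hrs : IsotropicPair r s :=
    ⟨symp_eq_zero_of_support hr hs, fr, fs, hfr, hfr0 s hs, hfs0 r hr, hfs⟩
  have ha : ∀ j : Fin (2 * g), ¬j.val < 2 → stdA ℤ g 0 j = 0 := fun j hj => by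
    simp [stdA]
    omega
  have hsa : IsotropicPair s (stdA ℤ g 0) := by
    refine ⟨?_, fs, LinearMap.proj ⟨0, by omega⟩, hfs, hfs0 _ ha, hs _ (by simp), by simp [stdA]⟩
    rw [symp_swap, symp_eq_zero_of_support ha hs, neg_zero]
  exact hv_eq ▸ (hrs.reflTransGen_of_isCoprime hdm).tail hsa

theorem _root_.Relation.ReflTransGen.exists_fin_path {α : Type*} {r : α → α → Prop} {a b : α}
    (h : ReflTransGen r a b) :
    ∃ (N : ℕ) (c : Fin (N + 1) → α),
      c 0 = a ∧ c (Fin.last N) = b ∧ ∀ i : Fin N, r (c i.castSucc) (c i.succ) := by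
  induction h with
  | refl => exact ⟨0, fun _ => a, rfl, rfl, Fin.elim0⟩
  | @tail b w _ hbw ih =>
    obtain ⟨N, c, h0, hN, hc⟩ := ih
    refine ⟨N + 1, Fin.snoc c w, by simpa using h0, by simp, fun i => ?_⟩
    cases i using Fin.lastCases with
    | last => simpa [hN] using hbw
    | cast j =>
      rw [Fin.succ_castSucc, Fin.snoc_castSucc, Fin.snoc_castSucc]
      exact hc j

/-- the graph on primitive vectors of `ℤ^{2g}` with edges the rank-2
isotropic unimodular pairs is connected. -/
theorem stmt2 (g : ℕ) (hg : 2 ≤ g) (v w : Fin (2 * g) → ℤ)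
    (hv : Primitive v) (hw : Primitive w) :
    ∃ (N : ℕ) (c : Fin (N + 1) → Fin (2 * g) → ℤ),
      c 0 = v ∧ c (Fin.last N) = w ∧ (∀ i, Primitive (c i)) ∧
      ∀ i : Fin N, c i.castSucc ≠ c i.succ ∧ symp (c i.castSucc) (c i.succ) = 0 ∧
        IsUnimodular ![c i.castSucc, c i.succ] := by
  have hvw : ReflTransGen IsotropicPair v w :=
    (reflTransGen_stdA hg hv).trans (symm (reflTransGen_stdA hg hw))
  obtain ⟨N, c, h0, hN, hc⟩ := hvw.exists_fin_path
  refine ⟨N, c, h0, hN, fun i => ?_, fun i => ⟨(hc i).2.ne, (hc i).1, (hc i).2.isUnimodular⟩⟩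
  cases i using Fin.cases with
  | zero => rwa [h0]
  | succ j => exact (hc j).primitive_right

end Paper
end

section
/- Let U ⊆ V be a ℚ-subspace, let w_1, w_2, w_3 ∈ U^⊥ be pairwise ω-orthogonal vectors, and let u_1, u_2, u_3 ∈ U^⊥ be pairwise ω-orthogonal vectors with ω(w_i, u_j) = δ_{ij} for all i, j ∈ {1,2,3}. Then, inside Λ³V, the subspace Λ³(U^⊥) is the internal direct sum of the four subspaces Λ³(U^⊥ ∩ w_1^⊥), u_1∧Λ²(U^⊥ ∩ w_2^⊥), u_1∧u_2∧(U^⊥ ∩ w_3^⊥), and ℚ·(u_1∧u_2∧u_3). -/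
namespace Paper

section Aux
open ExteriorAlgebra
variable {g : ℕ}

theorem symp_anti (x y : Fin (2 * g) → ℚ) : symp x y = - symp y x := by
  have h : symp x y + symp y x = 0 := by
    unfold symp; rw [← Finset.sum_add_distrib]
    apply Finset.sum_eq_zero; intro i _; ring
  linarith

def sympL (w : Fin (2 * g) → ℚ) : Module.Dual ℚ (Fin (2 * g) → ℚ) where
  toFun x := symp x w
  map_add' x y := symp_add_left x y w
  map_smul' c x := symp_smul_left c x w

noncomputable def ctr (w : Fin (2 * g) → ℚ) :
    ExteriorAlgebra ℚ (Fin (2 * g) → ℚ) →ₗ[ℚ] ExteriorAlgebra ℚ (Fin (2 * g) → ℚ) :=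
  CliffordAlgebra.contractLeft (Q := (0 : QuadraticForm ℚ (Fin (2 * g) → ℚ))) (sympL w)

theorem ctr_ι (w z : Fin (2 * g) → ℚ) :
    ctr w (ι ℚ z) = algebraMap ℚ _ (symp z w) :=
  CliffordAlgebra.contractLeft_ι (Q := (0 : QuadraticForm ℚ _)) (sympL w) z

theorem ctr_ι_mul (w m : Fin (2 * g) → ℚ) (x : ExteriorAlgebra ℚ (Fin (2 * g) → ℚ)) :
    ctr w (ι ℚ m * x) = symp m w • x - ι ℚ m * ctr w x :=
  CliffordAlgebra.contractLeft_ι_mul (Q := (0 : QuadraticForm ℚ _)) (sympL w) m x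

theorem ctr_ι2 (w z₁ z₂ : Fin (2 * g) → ℚ) :
    ctr w (ι ℚ z₁ * ι ℚ z₂) = symp z₁ w • ι ℚ z₂ - symp z₂ w • ι ℚ z₁ := by
  rw [ctr_ι_mul, ctr_ι, ← Algebra.commutes, ← Algebra.smul_def]

theorem ctr_ι3 (w z₁ z₂ z₃ : Fin (2 * g) → ℚ) :
    ctr w (ι ℚ z₁ * ι ℚ z₂ * ι ℚ z₃)
      = symp z₁ w • (ι ℚ z₂ * ι ℚ z₃) - symp z₂ w • (ι ℚ z₁ * ι ℚ z₃)
        + symp z₃ w • (ι ℚ z₁ * ι ℚ z₂) := by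
  rw [mul_assoc, ctr_ι_mul, ctr_ι2, mul_sub, mul_smul_comm, mul_smul_comm]
  abel


theorem ι_swap (a b : Fin (2 * g) → ℚ) : ι ℚ a * ι ℚ b = -(ι ℚ b * ι ℚ a) :=
  eq_neg_of_add_eq_zero_left (ι_add_mul_swap a b)

theorem ι3_zero1 (a b : Fin (2 * g) → ℚ) : ι ℚ a * ι ℚ a * ι ℚ b = 0 := by
  rw [ι_sq_zero, zero_mul]

theorem ι3_zero2 (a b : Fin (2 * g) → ℚ) : ι ℚ a * ι ℚ b * ι ℚ a = 0 := by
  rw [mul_assoc, ι_swap b a, mul_neg, ← mul_assoc, ι_sq_zero, zero_mul, neg_zero]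

theorem ι3_zero3 (a b : Fin (2 * g) → ℚ) : ι ℚ a * ι ℚ b * ι ℚ b = 0 := by
  rw [mul_assoc, ι_sq_zero, mul_zero]

theorem ι3_swap12 (a b c : Fin (2 * g) → ℚ) :
    ι ℚ a * ι ℚ b * ι ℚ c = -(ι ℚ b * ι ℚ a * ι ℚ c) := by
  rw [ι_swap a b, neg_mul]

theorem ι3_swap23 (a b c : Fin (2 * g) → ℚ) :
    ι ℚ a * ι ℚ b * ι ℚ c = -(ι ℚ a * ι ℚ c * ι ℚ b) := by
  rw [mul_assoc, ι_swap b c, mul_neg, mul_assoc]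

theorem ι3_rot (a b c : Fin (2 * g) → ℚ) :
    ι ℚ a * ι ℚ b * ι ℚ c = ι ℚ c * ι ℚ a * ι ℚ b := by
  rw [ι3_swap23, ι3_swap12, neg_neg]

end Aux

/-- `Λ² W`. -/
def wedge2 {g : ℕ} (W : Submodule ℚ (Fin (2 * g) → ℚ)) :
    Submodule ℚ (ExteriorAlgebra ℚ (Fin (2 * g) → ℚ)) :=
  Submodule.span ℚ {x | ∃ z₁ ∈ W, ∃ z₂ ∈ W,
    x = ExteriorAlgebra.ι ℚ z₁ * ExteriorAlgebra.ι ℚ z₂}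

section Aux2
open ExteriorAlgebra
variable {g : ℕ}

theorem ctr_zero_wedge2 {w : Fin (2 * g) → ℚ} {W : Submodule ℚ (Fin (2 * g) → ℚ)}
    (hW : ∀ z ∈ W, symp z w = 0) {x} (hx : x ∈ wedge2 W) : ctr w x = 0 := by
  induction hx using Submodule.span_induction with
  | mem x hx =>
    obtain ⟨z₁, h₁, z₂, h₂, rfl⟩ := hx
    rw [ctr_ι2, hW _ h₁, hW _ h₂, zero_smul, zero_smul, sub_zero]
  | zero => simp
  | add x y _ _ ihx ihy => rw [map_add, ihx, ihy, add_zero]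
  | smul c x _ ih => rw [map_smul, ih, smul_zero]

theorem expand3 (y₁ y₂ y₃ v : Fin (2 * g) → ℚ) (c₁ c₂ c₃ : ℚ) :
    ι ℚ (y₁ + c₁ • v) * ι ℚ (y₂ + c₂ • v) * ι ℚ (y₃ + c₃ • v)
      = ι ℚ y₁ * ι ℚ y₂ * ι ℚ y₃
        + (c₁ • (ι ℚ v * ι ℚ y₂ * ι ℚ y₃) - c₂ • (ι ℚ v * ι ℚ y₁ * ι ℚ y₃)
          + c₃ • (ι ℚ v * ι ℚ y₁ * ι ℚ y₂)) := by
  simp only [map_add, map_smul, add_mul, mul_add, smul_mul_assoc, mul_smul_comm, smul_smul,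
    ι3_zero1, ι3_zero2, ι3_zero3, smul_zero, add_zero, zero_add,
    ι3_swap12 y₁ v y₃, ι3_rot y₁ y₂ v, smul_neg]
  abel

theorem expandB0 (v₀ y₁ y₂ : Fin (2 * g) → ℚ) (a₁ a₂ : ℚ) :
    ι ℚ v₀ * ι ℚ (y₁ + a₁ • v₀) * ι ℚ (y₂ + a₂ • v₀)
      = ι ℚ v₀ * ι ℚ y₁ * ι ℚ y₂ := by
  simp only [map_add, map_smul, add_mul, mul_add, smul_mul_assoc, mul_smul_comm, smul_smul,
    ι3_zero1, ι3_zero2, ι3_zero3, smul_zero, add_zero, zero_add]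

theorem expandB (v₀ v y₁ y₂ : Fin (2 * g) → ℚ) (a₁ a₂ b₁ b₂ : ℚ) :
    ι ℚ v₀ * ι ℚ (y₁ + a₁ • v₀ + b₁ • v) * ι ℚ (y₂ + a₂ • v₀ + b₂ • v)
      = ι ℚ v₀ * ι ℚ y₁ * ι ℚ y₂
        + (b₁ • (ι ℚ v₀ * ι ℚ v * ι ℚ y₂) - b₂ • (ι ℚ v₀ * ι ℚ v * ι ℚ y₁)) := by
  simp only [map_add, map_smul, add_mul, mul_add, smul_mul_assoc, mul_smul_comm, smul_smul,
    ι3_zero1, ι3_zero2, ι3_zero3, smul_zero, add_zero, zero_add,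
    ι3_swap23 v₀ y₁ v, smul_neg]
  abel

theorem expandC0 (v₀ v₁ y : Fin (2 * g) → ℚ) (a b : ℚ) :
    ι ℚ v₀ * ι ℚ v₁ * ι ℚ (y + a • v₀ + b • v₁)
      = ι ℚ v₀ * ι ℚ v₁ * ι ℚ y := by
  simp only [map_add, map_smul, add_mul, mul_add, smul_mul_assoc, mul_smul_comm, smul_smul,
    ι3_zero1, ι3_zero2, ι3_zero3, smul_zero, add_zero, zero_add]

theorem expandC (v₀ v₁ v₂ y : Fin (2 * g) → ℚ) (a b c : ℚ) :
    ι ℚ v₀ * ι ℚ v₁ * ι ℚ (y + a • v₀ + b • v₁ + c • v₂)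
      = ι ℚ v₀ * ι ℚ v₁ * ι ℚ y + c • (ι ℚ v₀ * ι ℚ v₁ * ι ℚ v₂) := by
  simp only [map_add, map_smul, add_mul, mul_add, smul_mul_assoc, mul_smul_comm, smul_smul,
    ι3_zero1, ι3_zero2, ι3_zero3, smul_zero, add_zero, zero_add]

end Aux2
section Main
open ExteriorAlgebra
variable {g : ℕ}

theorem ctr_zero_wedge3 {w : Fin (2 * g) → ℚ} {W : Submodule ℚ (Fin (2 * g) → ℚ)}
    (hW : ∀ z ∈ W, symp z w = 0) {x} (hx : x ∈ wedge3 W) : ctr w x = 0 := by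
  induction hx using Submodule.span_induction with
  | mem x hx =>
    obtain ⟨z₁, h₁, z₂, h₂, z₃, h₃, rfl⟩ := hx
    rw [ctr_ι3, hW _ h₁, hW _ h₂, hW _ h₃, zero_smul, zero_smul, zero_smul, sub_zero, add_zero]
  | zero => simp
  | add x y _ _ ihx ihy => rw [map_add, ihx, ihy, add_zero]
  | smul c x _ ih => rw [map_smul, ih, smul_zero]

theorem uWedge2_eq (u : Fin (2 * g) → ℚ) (W : Submodule ℚ (Fin (2 * g) → ℚ)) :
    uWedge2 u W = Submodule.map (LinearMap.mulLeft ℚ (ι ℚ u)) (wedge2 W) := by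
  unfold uWedge2 wedge2
  rw [Submodule.map_span]
  congr 1
  ext x
  simp only [Set.mem_image, Set.mem_setOf_eq, LinearMap.mulLeft_apply]
  constructor
  · rintro ⟨z₁, h₁, z₂, h₂, rfl⟩
    exact ⟨ι ℚ z₁ * ι ℚ z₂, ⟨z₁, h₁, z₂, h₂, rfl⟩, (mul_assoc _ _ _).symm⟩
  · rintro ⟨y, ⟨z₁, h₁, z₂, h₂, rfl⟩, rfl⟩
    exact ⟨z₁, h₁, z₂, h₂, (mul_assoc _ _ _).symm⟩

theorem uuWedge1_eq (u u' : Fin (2 * g) → ℚ) (W : Submodule ℚ (Fin (2 * g) → ℚ)) :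
    uuWedge1 u u' W = Submodule.map (LinearMap.mulLeft ℚ (ι ℚ u * ι ℚ u'))
      (Submodule.map (ι ℚ) W) := by
  apply le_antisymm
  · rw [uuWedge1, Submodule.span_le]
    rintro x ⟨z, hz, rfl⟩
    exact ⟨ι ℚ z, ⟨z, hz, rfl⟩, rfl⟩
  · rintro x ⟨y, ⟨z, hz, rfl⟩, rfl⟩
    exact Submodule.subset_span ⟨z, hz, rfl⟩

end Main

set_option maxHeartbeats 2000000 in
/-- Lemma 3.6 — the decomposition of `Λ³(U^⊥)`. -/
theorem stmt11 (g : ℕ) (U : Submodule ℚ (Fin (2 * g) → ℚ))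
    (w u : Fin 3 → Fin (2 * g) → ℚ)
    (hwU : ∀ i, w i ∈ perp (U : Set (Fin (2 * g) → ℚ)))
    (huU : ∀ i, u i ∈ perp (U : Set (Fin (2 * g) → ℚ)))
    (hworth : ∀ i j, i ≠ j → symp (w i) (w j) = 0)
    (huorth : ∀ i j, i ≠ j → symp (u i) (u j) = 0)
    (hdual : ∀ i j, symp (w i) (u j) = if i = j then 1 else 0) :
    let P := perp (U : Set (Fin (2 * g) → ℚ))
    let A := wedge3 (P ⊓ perp {w 0})
    let B := uWedge2 (u 0) (P ⊓ perp {w 1})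
    let C := uuWedge1 (u 0) (u 1) (P ⊓ perp {w 2})
    let D := Submodule.span ℚ
      {ExteriorAlgebra.ι ℚ (u 0) * ExteriorAlgebra.ι ℚ (u 1) * ExteriorAlgebra.ι ℚ (u 2)}
    wedge3 P = A ⊔ B ⊔ C ⊔ D ∧
      ∀ a ∈ A, ∀ b ∈ B, ∀ c ∈ C, ∀ d ∈ D,
        a + b + c + d = 0 → a = 0 ∧ b = 0 ∧ c = 0 ∧ d = 0 := by
  intro P A B C D
  have hself : ∀ x : Fin (2 * g) → ℚ, symp x x = 0 := fun x => by
    have := symp_anti x x; linarith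
  have huw : ∀ i j, symp (u i) (w j) = if j = i then (-1 : ℚ) else 0 := by
    intro i j
    rw [symp_anti, hdual j i]
    by_cases h : j = i <;> simp [h]
  have hmem : ∀ (x aa : Fin (2 * g) → ℚ), x ∈ perp {aa} ↔ symp x aa = 0 := by
    intro x aa
    constructor
    · intro h; exact h aa rfl
    · intro h bb hbb; rw [Set.mem_singleton_iff] at hbb; rw [hbb]; exact h
  -- decompositions of elements of `P`
  have hdec1 : ∀ z ∈ perp (U : Set (Fin (2 * g) → ℚ)),
      ∃ y ∈ perp (U : Set (Fin (2 * g) → ℚ)) ⊓ perp {w 0}, ∃ c₀ : ℚ, z = y + c₀ • u 0 := by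
    intro z hz
    refine ⟨z + symp z (w 0) • u 0,
      ⟨Submodule.add_mem _ hz (Submodule.smul_mem _ _ (huU 0)), (hmem _ _).mpr ?_⟩,
      -(symp z (w 0)), ?_⟩
    · rw [symp_add_left, symp_smul_left]
      simp [huw]
    · rw [neg_smul, add_neg_cancel_right]
  have hdec2 : ∀ z ∈ perp (U : Set (Fin (2 * g) → ℚ)),
      ∃ y ∈ perp (U : Set (Fin (2 * g) → ℚ)) ⊓ perp {w 0} ⊓ perp {w 1},
        ∃ c₀ c₁ : ℚ, z = y + c₀ • u 0 + c₁ • u 1 := by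
    intro z hz
    refine ⟨z + symp z (w 0) • u 0 + symp z (w 1) • u 1,
      ⟨⟨Submodule.add_mem _ (Submodule.add_mem _ hz (Submodule.smul_mem _ _ (huU 0)))
          (Submodule.smul_mem _ _ (huU 1)), (hmem _ _).mpr ?_⟩, (hmem _ _).mpr ?_⟩,
      -(symp z (w 0)), -(symp z (w 1)), ?_⟩
    · rw [symp_add_left, symp_add_left, symp_smul_left, symp_smul_left]
      simp [huw]
    · rw [symp_add_left, symp_add_left, symp_smul_left, symp_smul_left]
      simp [huw]
    · rw [neg_smul, neg_smul]
      abel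
  have hdec3 : ∀ z ∈ perp (U : Set (Fin (2 * g) → ℚ)),
      ∃ y ∈ perp (U : Set (Fin (2 * g) → ℚ)) ⊓ perp {w 0} ⊓ perp {w 1} ⊓ perp {w 2},
        ∃ c₀ c₁ c₂ : ℚ, z = y + c₀ • u 0 + c₁ • u 1 + c₂ • u 2 := by
    intro z hz
    refine ⟨z + symp z (w 0) • u 0 + symp z (w 1) • u 1 + symp z (w 2) • u 2,
      ⟨⟨⟨Submodule.add_mem _ (Submodule.add_mem _ (Submodule.add_mem _ hz
            (Submodule.smul_mem _ _ (huU 0))) (Submodule.smul_mem _ _ (huU 1)))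
          (Submodule.smul_mem _ _ (huU 2)), (hmem _ _).mpr ?_⟩, (hmem _ _).mpr ?_⟩,
        (hmem _ _).mpr ?_⟩,
      -(symp z (w 0)), -(symp z (w 1)), -(symp z (w 2)), ?_⟩
    · rw [symp_add_left, symp_add_left, symp_add_left, symp_smul_left, symp_smul_left,
        symp_smul_left]
      simp [huw]
    · rw [symp_add_left, symp_add_left, symp_add_left, symp_smul_left, symp_smul_left,
        symp_smul_left]
      simp [huw]
    · rw [symp_add_left, symp_add_left, symp_add_left, symp_smul_left, symp_smul_left,
        symp_smul_left]
      simp [huw]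
    · rw [neg_smul, neg_smul, neg_smul]
      abel
  -- decomposition for the B-reduction
  have hdecB : ∀ z ∈ perp (U : Set (Fin (2 * g) → ℚ)) ⊓ perp {w 1},
      ∃ y ∈ perp (U : Set (Fin (2 * g) → ℚ)) ⊓ perp {w 0} ⊓ perp {w 1},
        ∃ c₀ : ℚ, z = y + c₀ • u 0 := by
    intro z hz
    refine ⟨z + symp z (w 0) • u 0,
      ⟨⟨Submodule.add_mem _ hz.1 (Submodule.smul_mem _ _ (huU 0)), (hmem _ _).mpr ?_⟩,
        (hmem _ _).mpr ?_⟩, -(symp z (w 0)), ?_⟩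
    · rw [symp_add_left, symp_smul_left]
      simp [huw]
    · rw [symp_add_left, symp_smul_left]
      have h1 : symp z (w 1) = 0 := (hmem _ _).mp hz.2
      simp [huw, h1]
    · rw [neg_smul, add_neg_cancel_right]
  -- decomposition for the C-reduction
  have hdecC : ∀ z ∈ perp (U : Set (Fin (2 * g) → ℚ)) ⊓ perp {w 2},
      ∃ y ∈ perp (U : Set (Fin (2 * g) → ℚ)) ⊓ perp {w 0} ⊓ perp {w 1} ⊓ perp {w 2},
        ∃ c₀ c₁ : ℚ, z = y + c₀ • u 0 + c₁ • u 1 := by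
    intro z hz
    refine ⟨z + symp z (w 0) • u 0 + symp z (w 1) • u 1,
      ⟨⟨⟨Submodule.add_mem _ (Submodule.add_mem _ hz.1 (Submodule.smul_mem _ _ (huU 0)))
          (Submodule.smul_mem _ _ (huU 1)), (hmem _ _).mpr ?_⟩, (hmem _ _).mpr ?_⟩,
        (hmem _ _).mpr ?_⟩, -(symp z (w 0)), -(symp z (w 1)), ?_⟩
    · rw [symp_add_left, symp_add_left, symp_smul_left, symp_smul_left]
      simp [huw]
    · rw [symp_add_left, symp_add_left, symp_smul_left, symp_smul_left]
      simp [huw]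
    · rw [symp_add_left, symp_add_left, symp_smul_left, symp_smul_left]
      have h2 : symp z (w 2) = 0 := (hmem _ _).mp hz.2
      simp [huw, h2]
    · rw [neg_smul, neg_smul]
      abel
  -- the three span inclusions
  have claim1 : wedge3 (perp (U : Set (Fin (2 * g) → ℚ)))
      ≤ wedge3 (perp (U : Set (Fin (2 * g) → ℚ)) ⊓ perp {w 0})
        ⊔ uWedge2 (u 0) (perp (U : Set (Fin (2 * g) → ℚ))) := by
    refine Submodule.span_le.mpr ?_
    rintro x ⟨z₁, h₁, z₂, h₂, z₃, h₃, rfl⟩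
    obtain ⟨y₁, hy₁, c₁, rfl⟩ := hdec1 z₁ h₁
    obtain ⟨y₂, hy₂, c₂, rfl⟩ := hdec1 z₂ h₂
    obtain ⟨y₃, hy₃, c₃, rfl⟩ := hdec1 z₃ h₃
    rw [expand3]
    refine Submodule.add_mem _
      (Submodule.mem_sup_left (Submodule.subset_span ⟨y₁, hy₁, y₂, hy₂, y₃, hy₃, rfl⟩))
      (Submodule.mem_sup_right ?_)
    have hg : ∀ p q : Fin (2 * g) → ℚ, p ∈ perp (U : Set (Fin (2 * g) → ℚ)) →
        q ∈ perp (U : Set (Fin (2 * g) → ℚ)) →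
        ExteriorAlgebra.ι ℚ (u 0) * ExteriorAlgebra.ι ℚ p * ExteriorAlgebra.ι ℚ q ∈ uWedge2 (u 0) (perp (U : Set (Fin (2 * g) → ℚ))) :=
      fun p q hp hq => Submodule.subset_span ⟨p, hp, q, hq, rfl⟩
    exact Submodule.add_mem _
      (Submodule.sub_mem _ (Submodule.smul_mem _ _ (hg _ _ hy₂.1 hy₃.1))
        (Submodule.smul_mem _ _ (hg _ _ hy₁.1 hy₃.1)))
      (Submodule.smul_mem _ _ (hg _ _ hy₁.1 hy₂.1))
  have claim2 : uWedge2 (u 0) (perp (U : Set (Fin (2 * g) → ℚ)))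
      ≤ uWedge2 (u 0) (perp (U : Set (Fin (2 * g) → ℚ)) ⊓ perp {w 1})
        ⊔ uuWedge1 (u 0) (u 1) (perp (U : Set (Fin (2 * g) → ℚ))) := by
    refine Submodule.span_le.mpr ?_
    rintro x ⟨z₁, h₁, z₂, h₂, rfl⟩
    obtain ⟨y₁, hy₁, a₁, b₁, rfl⟩ := hdec2 z₁ h₁
    obtain ⟨y₂, hy₂, a₂, b₂, rfl⟩ := hdec2 z₂ h₂
    rw [expandB]
    have hg : ∀ p q : Fin (2 * g) → ℚ,
        p ∈ perp (U : Set (Fin (2 * g) → ℚ)) ⊓ perp {w 1} →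
        q ∈ perp (U : Set (Fin (2 * g) → ℚ)) ⊓ perp {w 1} →
        ExteriorAlgebra.ι ℚ (u 0) * ExteriorAlgebra.ι ℚ p * ExteriorAlgebra.ι ℚ q
          ∈ uWedge2 (u 0) (perp (U : Set (Fin (2 * g) → ℚ)) ⊓ perp {w 1}) :=
      fun p q hp hq => Submodule.subset_span ⟨p, hp, q, hq, rfl⟩
    have hg2 : ∀ p : Fin (2 * g) → ℚ, p ∈ perp (U : Set (Fin (2 * g) → ℚ)) →
        ExteriorAlgebra.ι ℚ (u 0) * ExteriorAlgebra.ι ℚ (u 1) * ExteriorAlgebra.ι ℚ p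
          ∈ uuWedge1 (u 0) (u 1) (perp (U : Set (Fin (2 * g) → ℚ))) :=
      fun p hp => Submodule.subset_span ⟨p, hp, rfl⟩
    have hm1 : y₁ ∈ perp (U : Set (Fin (2 * g) → ℚ)) ⊓ perp {w 1} := ⟨hy₁.1.1, hy₁.2⟩
    have hm2 : y₂ ∈ perp (U : Set (Fin (2 * g) → ℚ)) ⊓ perp {w 1} := ⟨hy₂.1.1, hy₂.2⟩
    exact Submodule.add_mem _ (Submodule.mem_sup_left (hg _ _ hm1 hm2))
      (Submodule.mem_sup_right (Submodule.sub_mem _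
        (Submodule.smul_mem _ _ (hg2 _ hy₂.1.1)) (Submodule.smul_mem _ _ (hg2 _ hy₁.1.1))))
  have claim3 : uuWedge1 (u 0) (u 1) (perp (U : Set (Fin (2 * g) → ℚ)))
      ≤ uuWedge1 (u 0) (u 1) (perp (U : Set (Fin (2 * g) → ℚ)) ⊓ perp {w 2})
        ⊔ Submodule.span ℚ
          {ExteriorAlgebra.ι ℚ (u 0) * ExteriorAlgebra.ι ℚ (u 1) * ExteriorAlgebra.ι ℚ (u 2)} := by
    refine Submodule.span_le.mpr ?_
    rintro x ⟨z, hz, rfl⟩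
    obtain ⟨y, hy, c₀, c₁, c₂, rfl⟩ := hdec3 z hz
    rw [expandC]
    refine Submodule.add_mem _
      (Submodule.mem_sup_left (Submodule.subset_span ⟨y, ⟨hy.1.1.1, hy.2⟩, rfl⟩))
      (Submodule.mem_sup_right (Submodule.smul_mem _ _
        (Submodule.mem_span_singleton_self _)))
  -- the reverse inclusion
  have hge : wedge3 (perp (U : Set (Fin (2 * g) → ℚ)) ⊓ perp {w 0})
        ⊔ uWedge2 (u 0) (perp (U : Set (Fin (2 * g) → ℚ)) ⊓ perp {w 1})
        ⊔ uuWedge1 (u 0) (u 1) (perp (U : Set (Fin (2 * g) → ℚ)) ⊓ perp {w 2})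
        ⊔ Submodule.span ℚ
          {ExteriorAlgebra.ι ℚ (u 0) * ExteriorAlgebra.ι ℚ (u 1) * ExteriorAlgebra.ι ℚ (u 2)}
      ≤ wedge3 (perp (U : Set (Fin (2 * g) → ℚ))) := by
    refine sup_le (sup_le (sup_le ?_ ?_) ?_) ?_
    · refine Submodule.span_le.mpr ?_
      rintro x ⟨z₁, h₁, z₂, h₂, z₃, h₃, rfl⟩
      exact Submodule.subset_span ⟨z₁, h₁.1, z₂, h₂.1, z₃, h₃.1, rfl⟩
    · refine Submodule.span_le.mpr ?_
      rintro x ⟨z₁, h₁, z₂, h₂, rfl⟩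
      exact Submodule.subset_span ⟨u 0, huU 0, z₁, h₁.1, z₂, h₂.1, rfl⟩
    · refine Submodule.span_le.mpr ?_
      rintro x ⟨z, hz, rfl⟩
      exact Submodule.subset_span ⟨u 0, huU 0, u 1, huU 1, z, hz.1, rfl⟩
    · refine Submodule.span_le.mpr ?_
      rintro x hx
      rw [Set.mem_singleton_iff] at hx
      subst hx
      exact Submodule.subset_span ⟨u 0, huU 0, u 1, huU 1, u 2, huU 2, rfl⟩
  have hle : wedge3 (perp (U : Set (Fin (2 * g) → ℚ)))
      ≤ wedge3 (perp (U : Set (Fin (2 * g) → ℚ)) ⊓ perp {w 0})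
        ⊔ uWedge2 (u 0) (perp (U : Set (Fin (2 * g) → ℚ)) ⊓ perp {w 1})
        ⊔ uuWedge1 (u 0) (u 1) (perp (U : Set (Fin (2 * g) → ℚ)) ⊓ perp {w 2})
        ⊔ Submodule.span ℚ
          {ExteriorAlgebra.ι ℚ (u 0) * ExteriorAlgebra.ι ℚ (u 1) * ExteriorAlgebra.ι ℚ (u 2)} := by
    refine le_trans claim1 ?_
    rw [sup_assoc, sup_assoc]
    exact sup_le_sup_left (le_trans claim2 (sup_le_sup_left claim3 _)) _
  -- reductions for the independence part
  have claimB : uWedge2 (u 0) (perp (U : Set (Fin (2 * g) → ℚ)) ⊓ perp {w 1})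
      ≤ uWedge2 (u 0) (perp (U : Set (Fin (2 * g) → ℚ)) ⊓ perp {w 0} ⊓ perp {w 1}) := by
    refine Submodule.span_le.mpr ?_
    rintro x ⟨z₁, h₁, z₂, h₂, rfl⟩
    obtain ⟨y₁, hy₁, a₁, rfl⟩ := hdecB z₁ h₁
    obtain ⟨y₂, hy₂, a₂, rfl⟩ := hdecB z₂ h₂
    rw [expandB0]
    exact Submodule.subset_span ⟨y₁, hy₁, y₂, hy₂, rfl⟩
  have claimC : uuWedge1 (u 0) (u 1) (perp (U : Set (Fin (2 * g) → ℚ)) ⊓ perp {w 2})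
      ≤ uuWedge1 (u 0) (u 1)
        (perp (U : Set (Fin (2 * g) → ℚ)) ⊓ perp {w 0} ⊓ perp {w 1} ⊓ perp {w 2}) := by
    refine Submodule.span_le.mpr ?_
    rintro x ⟨z, hz, rfl⟩
    obtain ⟨y, hy, c₀, c₁, rfl⟩ := hdecC z hz
    rw [expandC0]
    exact Submodule.subset_span ⟨y, hy, rfl⟩
  refine ⟨le_antisymm hle hge, ?_⟩
  intro a ha b hb c hc d hd hsum
  have hb2 := claimB hb
  have hc2 := claimC hc
  rw [uWedge2_eq] at hb2
  obtain ⟨b', hb', hbeq⟩ := hb2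
  rw [uuWedge1_eq] at hc2
  obtain ⟨y, ⟨zc, hzc, rfl⟩, hceq⟩ := hc2
  rw [Submodule.mem_span_singleton] at hd
  obtain ⟨r, hdeq⟩ := hd
  simp only [LinearMap.mulLeft_apply] at hbeq hceq
  -- symp values
  have h00 : symp (u 0) (w 0) = -1 := by rw [huw, if_pos rfl]
  have h10 : symp (u 1) (w 0) = 0 := by rw [huw, if_neg (by decide)]
  have h11 : symp (u 1) (w 1) = -1 := by rw [huw, if_pos rfl]
  have h20 : symp (u 2) (w 0) = 0 := by rw [huw, if_neg (by decide)]
  have h21 : symp (u 2) (w 1) = 0 := by rw [huw, if_neg (by decide)]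
  have h22 : symp (u 2) (w 2) = -1 := by rw [huw, if_pos rfl]
  have hzc0 : symp zc (w 0) = 0 := (hmem _ _).mp hzc.1.1.2
  have hzc1 : symp zc (w 1) = 0 := (hmem _ _).mp hzc.1.2
  have hzc2 : symp zc (w 2) = 0 := (hmem _ _).mp hzc.2
  -- contraction of the relation by w 0
  have hkA : ctr (w 0) a = 0 :=
    ctr_zero_wedge3 (W := perp (U : Set (Fin (2 * g) → ℚ)) ⊓ perp {w 0})
      (fun z hz => (hmem _ _).mp hz.2) ha
  have hkb'0 : ctr (w 0) b' = 0 :=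
    ctr_zero_wedge2 (W := perp (U : Set (Fin (2 * g) → ℚ)) ⊓ perp {w 0} ⊓ perp {w 1})
      (fun z hz => (hmem _ _).mp hz.1.2) hb'
  have hcb : ctr (w 0) b = -b' := by
    rw [← hbeq, ctr_ι_mul, h00, hkb'0, mul_zero, sub_zero, neg_one_smul]
  have hcc : ctr (w 0) c = -(ExteriorAlgebra.ι ℚ (u 1) * ExteriorAlgebra.ι ℚ zc) := by
    rw [← hceq, ctr_ι3, h00, h10, hzc0, zero_smul, zero_smul, sub_zero, add_zero, neg_one_smul]
  have hcd : ctr (w 0) d = -(r • (ExteriorAlgebra.ι ℚ (u 1) * ExteriorAlgebra.ι ℚ (u 2))) := by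
    rw [← hdeq, map_smul, ctr_ι3, h00, h10, h20, zero_smul, zero_smul, sub_zero, add_zero,
      neg_one_smul, smul_neg]
  have hE1 : b' + ExteriorAlgebra.ι ℚ (u 1) * ExteriorAlgebra.ι ℚ zc + r • (ExteriorAlgebra.ι ℚ (u 1) * ExteriorAlgebra.ι ℚ (u 2)) = 0 := by
    have h := congrArg (ctr (w 0)) hsum
    rw [map_zero, map_add, map_add, map_add, hkA, hcb, hcc, hcd, zero_add] at h
    have h2 : -(b' + ExteriorAlgebra.ι ℚ (u 1) * ExteriorAlgebra.ι ℚ zc + r • (ExteriorAlgebra.ι ℚ (u 1) * ExteriorAlgebra.ι ℚ (u 2))) = 0 := by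
      rw [← h]; abel
    exact neg_eq_zero.mp h2
  -- contraction by w 1
  have hkb'1 : ctr (w 1) b' = 0 :=
    ctr_zero_wedge2 (W := perp (U : Set (Fin (2 * g) → ℚ)) ⊓ perp {w 0} ⊓ perp {w 1})
      (fun z hz => (hmem _ _).mp hz.2) hb'
  have hX : ctr (w 1) (ExteriorAlgebra.ι ℚ (u 1) * ExteriorAlgebra.ι ℚ zc) = -(ExteriorAlgebra.ι ℚ zc) := by
    rw [ctr_ι2, h11, hzc1, zero_smul, sub_zero, neg_one_smul]
  have hY : ctr (w 1) (ExteriorAlgebra.ι ℚ (u 1) * ExteriorAlgebra.ι ℚ (u 2)) = -(ExteriorAlgebra.ι ℚ (u 2)) := by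
    rw [ctr_ι2, h11, h21, zero_smul, sub_zero, neg_one_smul]
  have hE2 : ExteriorAlgebra.ι ℚ zc + r • ExteriorAlgebra.ι ℚ (u 2) = 0 := by
    have h := congrArg (ctr (w 1)) hE1
    rw [map_zero, map_add, map_add, map_smul, hkb'1, hX, hY, zero_add, smul_neg] at h
    have h2 : -(ExteriorAlgebra.ι ℚ zc + r • ExteriorAlgebra.ι ℚ (u 2)) = 0 := by rw [← h]; abel
    exact neg_eq_zero.mp h2
  -- contraction by w 2 : r = 0
  have hr : r = 0 := by
    have h := congrArg (ctr (w 2)) hE2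
    rw [map_zero, map_add, map_smul, ctr_ι, ctr_ι, hzc2, h22, map_zero, zero_add] at h
    rw [map_neg, map_one, smul_neg, neg_eq_zero, ← Algebra.algebraMap_eq_smul_one,
      ExteriorAlgebra.algebraMap_eq_zero_iff] at h
    exact h
  have hιzc : ExteriorAlgebra.ι ℚ zc = 0 := by
    rw [hr, zero_smul, add_zero] at hE2
    exact hE2
  have hc0 : c = 0 := by rw [← hceq, hιzc, mul_zero]
  have hd0 : d = 0 := by rw [← hdeq, hr, zero_smul]
  have hb'0 : b' = 0 := by
    rw [hιzc, mul_zero, hr, zero_smul, add_zero, add_zero] at hE1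
    exact hE1
  have hb0 : b = 0 := by rw [← hbeq, hb'0, mul_zero]
  have ha0 : a = 0 := by
    rw [hb0, hc0, hd0, add_zero, add_zero, add_zero] at hsum
    exact hsum
  exact ⟨ha0, hb0, hc0, hd0⟩


end Paper
end
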